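/- Let A and B be n×n complex positive definite matrices and define A♮B := A^{1/2}(B^{1/2}A^{-1}B^{1/2})^{1/2}A^{1/2}. Then the largest eigenvalue of A♮B is at least the largest singular value of A^{1/2}B^{1/2}: λ₁(A♮B) ≥ λ₁(|A^{1/2}B^{1/2}|). -/

import Mathlib

open scoped ComplexOrder Matrix Classical

/-- The positive semidefinite square root of a positive semidefinite matrix
(junk value `0` if the matrix is not positive semidefinite). -/
noncomputable def sqrtm {n : ℕ} (A : Matrix (Fin n) (Fin n) ℂ) : Matrix (Fin n) (Fin n) ℂ :=
  if h : A.PosSemidef then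
    (h.1.eigenvectorUnitary : Matrix (Fin n) (Fin n) ℂ) *
      Matrix.diagonal ((↑) ∘ Real.sqrt ∘ h.1.eigenvalues) *
      (star h.1.eigenvectorUnitary : Matrix (Fin n) (Fin n) ℂ)
  else 0

/-- The absolute value `|X| = (Xᴴ X)^{1/2}` of a matrix. -/
noncomputable def absm {n : ℕ} (X : Matrix (Fin n) (Fin n) ℂ) : Matrix (Fin n) (Fin n) ℂ :=
  sqrtm (Xᴴ * X)

/-- The mean `A ♮ B := A^{1/2} (B^{1/2} A⁻¹ B^{1/2})^{1/2} A^{1/2}` of positive definite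
matrices. -/
noncomputable def naturalMean {n : ℕ} (A B : Matrix (Fin n) (Fin n) ℂ) :
    Matrix (Fin n) (Fin n) ℂ :=
  sqrtm A * sqrtm (sqrtm B * A⁻¹ * sqrtm B) * sqrtm A


/-- The largest eigenvalue of a Hermitian matrix (junk value `0` otherwise). -/
noncomputable def maxEig {n : ℕ} (A : Matrix (Fin n) (Fin n) ℂ) : ℝ :=
  if h : A.IsHermitian then ⨆ i, h.eigenvalues i else 0

/-!
Write `α = A^{1/2}`, `β = B^{1/2}` and `σ = (B^{1/2} A⁻¹ B^{1/2})^{1/4}`, so that `α² = β σ⁻⁴ β`.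
With `k = σ⁻¹ β` and `l = σ⁻¹ k σ`, the C⋆-identity gives `‖α β‖ = ‖l k‖` and
`‖A ♮ B‖ = ‖α σ‖² = ‖l‖²`. Since `k⋆ = σ k σ⁻¹`, the number `‖k‖² = ‖k⋆ k‖` is the spectral
radius of the similar element `σ⁻¹ k⋆ k σ = k l`, so `‖k‖ ≤ ‖l‖` and
`‖α β‖ ≤ ‖l‖ ‖k‖ ≤ ‖l‖²`. For positive semidefinite matrices the largest eigenvalue is the
operator norm, and `‖|X|‖ = ‖X‖`.
-/

open scoped Matrix.Norms.L2Operator MatrixOrder Ring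
open CFC

namespace CStarAlgebra

variable {E : Type*} [CStarAlgebra E]

lemma norm_eq_norm_of_star_mul_self_eq {x y : E} (h : star x * x = star y * y) : ‖x‖ = ‖y‖ := by
  have hsq : ‖x‖ * ‖x‖ = ‖y‖ * ‖y‖ := by
    rw [← CStarRing.norm_star_mul_self, h, CStarRing.norm_star_mul_self]
  exact (mul_self_inj (norm_nonneg x) (norm_nonneg y)).mp hsq

lemma norm_le_norm_units_conj_of_star_eq {k : E} (s : Eˣ) (h : star k = s * k * ↑s⁻¹) :
    ‖k‖ ≤ ‖↑s⁻¹ * k * s‖ := by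
  rcases subsingleton_or_nontrivial E with _ | _
  · simp [Subsingleton.elim k 0]
  have hsq : ‖k‖ * ‖k‖ ≤ ‖k‖ * ‖↑s⁻¹ * k * s‖ :=
    calc ‖k‖ * ‖k‖ = ‖star k * k‖ := CStarRing.norm_star_mul_self.symm
      _ = (spectralRadius ℂ (↑s⁻¹ * (star k * k) * s)).toReal := by
        rw [spectralRadius, spectrum.units_conjugate', ← spectralRadius,
          (IsSelfAdjoint.star_mul_self k).spectralRadius_eq_nnnorm]
        rfl
      _ ≤ ‖↑s⁻¹ * (star k * k) * s‖ :=
        ENNReal.toReal_le_of_le_ofReal (norm_nonneg _)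
          ((spectrum.spectralRadius_le_nnnorm _).trans_eq (ofReal_norm _).symm)
      _ = ‖k * (↑s⁻¹ * k * s)‖ := by simp [h, mul_assoc]
      _ ≤ ‖k‖ * ‖↑s⁻¹ * k * s‖ := norm_mul_le _ _
  rcases (norm_nonneg k).eq_or_lt with hk | hk
  · rw [← hk]
    exact norm_nonneg _
  · exact le_of_mul_le_mul_left hsq hk

lemma norm_mul_le_norm_mul_mul_of_mul_self_eq {α β : E} (σ : Eˣ) (hα : IsSelfAdjoint α)
    (hβ : IsSelfAdjoint β) (hσ : IsSelfAdjoint (σ : E))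
    (h : α * α = β * ↑σ⁻¹ * ↑σ⁻¹ * ↑σ⁻¹ * ↑σ⁻¹ * β) :
    ‖α * β‖ ≤ ‖α * σ * σ * α‖ := by
  have hσinv : star (↑σ⁻¹ : E) = ↑σ⁻¹ := by
    rw [← Units.coe_star_inv, show star σ = σ from Units.ext hσ.star_eq]
  set k : E := ↑σ⁻¹ * β
  set l : E := ↑σ⁻¹ * k * σ
  have hk : star k = σ * k * ↑σ⁻¹ := by
    simp [k, hσinv, hβ.star_eq]
  have hαβ : ‖α * β‖ = ‖l * k‖ := by
    refine norm_eq_norm_of_star_mul_self_eq ?_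
    simp only [k, l, star_mul, hσinv, hβ.star_eq, hα.star_eq, mul_assoc,
      Units.mul_inv_cancel_left]
    rw [← mul_assoc α α, h]
    simp only [mul_assoc]
  have hl : ‖l‖ = ‖α * σ‖ := by
    refine norm_eq_norm_of_star_mul_self_eq ?_
    simp only [k, l, star_mul, hσinv, hσ.star_eq, hβ.star_eq, hα.star_eq, mul_assoc]
    rw [← mul_assoc α α, h]
    simp only [mul_assoc]
  calc ‖α * β‖ = ‖l * k‖ := hαβ
    _ ≤ ‖l‖ * ‖k‖ := norm_mul_le _ _
    _ ≤ ‖l‖ * ‖l‖ := by gcongr; exact norm_le_norm_units_conj_of_star_eq σ hk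
    _ = ‖α * σ * σ * α‖ := by
      rw [hl, ← CStarRing.norm_self_mul_star]
      simp [hα.star_eq, hσ.star_eq, mul_assoc]

theorem norm_sqrt_mul_sqrt_le_norm_naturalMean [PartialOrder E] [StarOrderedRing E] {a b : E}
    (ha : IsStrictlyPositive a) (hb : IsStrictlyPositive b) :
    ‖sqrt a * sqrt b‖ ≤ ‖sqrt a * sqrt (sqrt b * a⁻¹ʳ * sqrt b) * sqrt a‖ := by
  obtain ⟨u, rfl⟩ := ha.isUnit
  obtain ⟨v, hv⟩ := hb.isUnit_cfcSqrt
  set T := sqrt (sqrt b * (↑u : E)⁻¹ʳ * sqrt b)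
  have hM : IsStrictlyPositive (sqrt b * (↑u : E)⁻¹ʳ * sqrt b) :=
    IsStrictlyPositive.conjugate_of_isUnit_of_isSelfAdjoint _ _ ⟨v, hv⟩
      (sqrt_nonneg b).isSelfAdjoint ha.ringInverse
  have hT : IsStrictlyPositive T := hM.sqrt
  obtain ⟨σ, hσ⟩ := hT.isUnit_cfcSqrt
  have hσ4 : σ * σ * σ * σ = v * u⁻¹ * v := by
    ext
    have hσσ : (σ : E) * σ = T := by rw [hσ]; exact sqrt_mul_sqrt_self T hT.nonneg
    calc ((σ * σ * σ * σ : Eˣ) : E) = T * T := by simp only [Units.val_mul, ← hσσ, mul_assoc]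
      _ = _ := by
        rw [show T * T = _ from sqrt_mul_sqrt_self _ hM.nonneg]
        simp only [Units.val_mul, Ring.inverse_unit, hv]
  rw [← sqrt_mul_sqrt_self T hT.nonneg, ← hσ, ← mul_assoc]
  refine norm_mul_le_norm_mul_mul_of_mul_self_eq σ (sqrt_nonneg _).isSelfAdjoint
    (sqrt_nonneg _).isSelfAdjoint (hσ ▸ (sqrt_nonneg _).isSelfAdjoint) ?_
  rw [sqrt_mul_sqrt_self _ ha.nonneg, ← hv]
  have hu : u = v * σ⁻¹ * σ⁻¹ * σ⁻¹ * σ⁻¹ * v := by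
    rw [show v * σ⁻¹ * σ⁻¹ * σ⁻¹ * σ⁻¹ * v = v * (σ * σ * σ * σ)⁻¹ * v by group, hσ4]
    group
  simp [hu]

end CStarAlgebra

section Matrix

variable {n : ℕ}

/-- Both sides are `0` off the positive semidefinite cone. -/
lemma sqrtm_eq_cfcSqrt (A : Matrix (Fin n) (Fin n) ℂ) : sqrtm A = sqrt A := by
  unfold sqrtm
  split_ifs with h
  · rw [sqrt_eq_cfc, cfc_nnreal_eq_real _ A, h.1.cfc_eq]
    simp only [Matrix.IsHermitian.cfc, Unitary.conjStarAlgAut_apply]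
    congr! with x
    rw [Real.sqrt]
  · rw [sqrt_eq_cfc, cfc_apply_of_not_predicate]
    rwa [Matrix.nonneg_iff_posSemidef]

lemma absm_eq_cfcAbs (X : Matrix (Fin n) (Fin n) ℂ) : absm X = CFC.abs X := by
  rw [absm, sqrtm_eq_cfcSqrt]
  rfl

lemma maxEig_eq_norm {H : Matrix (Fin n) (Fin n) ℂ} (hH : 0 ≤ H) : maxEig H = ‖H‖ := by
  have hPSD : H.PosSemidef := Matrix.nonneg_iff_posSemidef.mp hH
  rw [maxEig, dif_pos hPSD.1]
  rcases isEmpty_or_nonempty (Fin n) with _ | _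
  · rw [Real.iSup_of_isEmpty, Subsingleton.elim H 0, norm_zero]
  refine le_antisymm (Real.iSup_le (fun i => ?_) (norm_nonneg H)) ?_
  · exact (le_abs_self _).trans
      (spectrum.norm_le_norm_of_mem (hPSD.1.eigenvalues_mem_spectrum_real i))
  · obtain ⟨i, hi⟩ := hPSD.1.spectrum_real_eq_range_eigenvalues ▸
      CStarAlgebra.norm_mem_spectrum_of_nonneg hH
    exact hi ▸ le_ciSup (Set.finite_range _).bddAbove i

lemma naturalMean_eq (A B : Matrix (Fin n) (Fin n) ℂ) :
    naturalMean A B = sqrt A * sqrt (sqrt B * A⁻¹ʳ * sqrt B) * sqrt A := by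
  simp only [naturalMean, sqrtm_eq_cfcSqrt, Matrix.nonsing_inv_eq_ringInverse]

lemma naturalMean_nonneg (A B : Matrix (Fin n) (Fin n) ℂ) : 0 ≤ naturalMean A B := by
  rw [naturalMean_eq]
  exact conjugate_nonneg_of_nonneg (sqrt_nonneg _) (sqrt_nonneg _)

end Matrix

/-- For positive definite `A, B`, the largest eigenvalue of `A ♮ B` is at least the largest
singular value of `A^{1/2} B^{1/2}`, i.e. the largest eigenvalue of `|A^{1/2} B^{1/2}|`. -/
theorem maxEig_abs_le_maxEig_naturalMean {n : ℕ}
    (A B : Matrix (Fin n) (Fin n) ℂ) (hA : A.PosDef) (hB : B.PosDef) :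
    maxEig (absm (sqrtm A * sqrtm B)) ≤ maxEig (naturalMean A B) := by
  rw [absm_eq_cfcAbs, maxEig_eq_norm (CFC.abs_nonneg _), CFC.norm_abs,
    maxEig_eq_norm (naturalMean_nonneg A B), naturalMean_eq, sqrtm_eq_cfcSqrt, sqrtm_eq_cfcSqrt]
  exact CStarAlgebra.norm_sqrt_mul_sqrt_le_norm_naturalMean hA.isStrictlyPositive
    hB.isStrictlyPositive
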